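/- Theorem 3.3 (rooted integral expansion). Let (E, h) be a rooted integral gain graph on vertex set {1,…,n} and let m be any integer. Then the number of proper rooted m-colorations of (E, h) equals ∑_{B ∈ Lat^b(E)} μ(∅,B) · ∏_{W ∈ π(B)} (m − h_B(W))⁺. -/

import Mathlib

open Finset
open scoped Classical

/-- An edge of an integral gain graph on `Fin n`: the triple `(i, j, g)` represents an edge
from `i` to `j` with gain `g`. -/
abbrev GainEdge (n : ℕ) := Fin n × Fin n × ℤ

/-- `θ` is a potential for the edge set `S`: `θ j - θ i = g` for every edge `(i, j, g) ∈ S`. -/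
def IsPotential {n : ℕ} (S : Finset (GainEdge n)) (θ : Fin n → ℤ) : Prop :=
  ∀ e ∈ S, θ e.2.1 - θ e.1 = e.2.2

/-- An edge set is balanced if it admits a potential. -/
def IsBalanced {n : ℕ} (S : Finset (GainEdge n)) : Prop :=
  ∃ θ : Fin n → ℤ, IsPotential S θ

/-- Two vertices lie in the same connected component of (the underlying graph of) `S`. -/
def SameComp {n : ℕ} (S : Finset (GainEdge n)) (u v : Fin n) : Prop :=
  Relation.EqvGen (fun a b => ∃ g : ℤ, (a, b, g) ∈ S) u v

/-- The partition `π(S)` of the vertex set into the connected components of `S`,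
represented as the finite set of its blocks. -/
noncomputable def blocks {n : ℕ} (S : Finset (GainEdge n)) : Finset (Finset (Fin n)) :=
  Finset.univ.image fun v => Finset.univ.filter fun u => SameComp S u v

/-- A balanced edge set `B ⊆ E` is closed (in `E`) if adjoining to `B` any edge of `E ∖ B` whose
endpoints lie in the same block of `π(B)` destroys balance. -/
def GGClosed {n : ℕ} (E B : Finset (GainEdge n)) : Prop :=
  ∀ e ∈ E \ B, SameComp B e.1 e.2.1 → ¬ IsBalanced (insert e B)

/-- The poset `Lat^b(E)` of closed balanced subsets of `E` (as a finite set, ordered by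
inclusion). -/
noncomputable def Latb {n : ℕ} (E : Finset (GainEdge n)) : Finset (Finset (GainEdge n)) :=
  E.powerset.filter fun B => IsBalanced B ∧ GGClosed E B

/-- A coloration `x` is proper for `E` if `x j ≠ x i + g` for every edge `(i, j, g) ∈ E`. -/
def ProperFor {n : ℕ} (E : Finset (GainEdge n)) (x : Fin n → ℤ) : Prop :=
  ∀ e ∈ E, x e.2.1 ≠ x e.1 + e.2.2

/-- The number of proper colorations of `E` with colors in `{1, …, m}`. -/
noncomputable def properCount {n : ℕ} (E : Finset (GainEdge n)) (m : ℤ) : ℕ :=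
  Nat.card {x : Fin n → ℤ // (∀ v, 1 ≤ x v ∧ x v ≤ m) ∧ ProperFor E x}

/-- The number of proper rooted `m`-colorations of the rooted integral gain graph `(E, h)`:
maps `x` with `h v < x v ≤ m` for every vertex `v` that are proper for `E`. -/
noncomputable def rootedProperCount {n : ℕ} (E : Finset (GainEdge n)) (h : Fin n → ℤ)
    (m : ℤ) : ℕ :=
  Nat.card {x : Fin n → ℤ // (∀ v, h v < x v ∧ x v ≤ m) ∧ ProperFor E x}

/-!
A coloration `x` determines the set `S(x)` of edges of `E` along which it is improper; `x` is a
potential for `S(x)`, which makes `S(x)` a closed balanced set. For `A ∈ Lat^b(E)` with potential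
`θ`, the colorations with `A ⊆ S(x)` are `θ` shifted by one integer offset per block of `π(A)`,
and on a block `W` the admissible offsets form an interval of length `(m - h_A(W))⁺`. Summing
over the fibres of `S` therefore gives `∑_{B ⊇ A} #{x | S(x) = B} = ∏_W (m - h_A(W))⁺`, and
Möbius inversion on `Lat^b(E)` isolates the proper colorations, those with `S(x) = ∅`.
-/

variable {n : ℕ}

namespace SameComp

variable {S : Finset (GainEdge n)} {u v : Fin n}

lemma equivalence (S : Finset (GainEdge n)) : Equivalence (SameComp S) :=
  Relation.EqvGen.is_equivalence _

lemma rel_of_equivalence {r : Fin n → Fin n → Prop} (hr : Equivalence r)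
    (hS : ∀ e ∈ S, r e.1 e.2.1) (huv : SameComp S u v) : r u v :=
  hr.eqvGen_iff.1 <| huv.mono fun _ _ ⟨_, he⟩ => hS _ he

lemma eq_of_empty (huv : SameComp (∅ : Finset (GainEdge n)) u v) : u = v :=
  huv.rel_of_equivalence eq_equivalence fun _ he => absurd he (notMem_empty _)

end SameComp

lemma IsPotential.sub_eq_sub_of_sameComp {S : Finset (GainEdge n)} {θ₁ θ₂ : Fin n → ℤ}
    (h₁ : IsPotential S θ₁) (h₂ : IsPotential S θ₂) {u v : Fin n} (huv : SameComp S u v) :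
    θ₁ u - θ₂ u = θ₁ v - θ₂ v :=
  huv.rel_of_equivalence (eq_equivalence.comap fun w => θ₁ w - θ₂ w) fun e he => by
    have := h₁ e he
    have := h₂ e he
    simp only [Function.onFun]
    omega

section Blocks

variable {S : Finset (GainEdge n)}

noncomputable def component (S : Finset (GainEdge n)) (v : Fin n) : Finset (Fin n) :=
  univ.filter fun u => SameComp S u v

lemma mem_component {u v : Fin n} : u ∈ component S v ↔ SameComp S u v := by
  simp [component]

lemma self_mem_component (v : Fin n) : v ∈ component S v :=
  mem_component.2 ((SameComp.equivalence S).refl v)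

lemma component_mem_blocks (v : Fin n) : component S v ∈ blocks S :=
  mem_image_of_mem _ (mem_univ v)

lemma eq_component_of_mem_blocks {W : Finset (Fin n)} (hW : W ∈ blocks S) {v : Fin n}
    (hv : v ∈ W) : W = component S v := by
  obtain ⟨w, -, rfl⟩ := mem_image.1 hW
  have hvw : SameComp S v w := mem_component.1 hv
  change component S w = component S v
  ext u
  simp only [mem_component]
  exact ⟨fun hu => (SameComp.equivalence S).trans hu ((SameComp.equivalence S).symm hvw),
    fun hu => (SameComp.equivalence S).trans hu hvw⟩

lemma sameComp_of_mem_blocks {W : Finset (Fin n)} (hW : W ∈ blocks S) {u v : Fin n}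
    (hu : u ∈ W) (hv : v ∈ W) : SameComp S u v :=
  mem_component.1 (eq_component_of_mem_blocks hW hv ▸ hu)

lemma nonempty_of_mem_blocks {W : Finset (Fin n)} (hW : W ∈ blocks S) : W.Nonempty := by
  obtain ⟨w, -, rfl⟩ := mem_image.1 hW
  exact ⟨w, self_mem_component w⟩

end Blocks

section SatisfiedEdges

variable {E : Finset (GainEdge n)}

/-- The edges of `E` along which the coloration `x` is improper. -/
noncomputable def satisfiedEdges (E : Finset (GainEdge n)) (x : Fin n → ℤ) :
    Finset (GainEdge n) :=
  E.filter fun e => x e.2.1 = x e.1 + e.2.2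

lemma isPotential_iff {S : Finset (GainEdge n)} {x : Fin n → ℤ} :
    IsPotential S x ↔ ∀ e ∈ S, x e.2.1 = x e.1 + e.2.2 :=
  forall₂_congr fun _ _ => by omega

lemma subset_satisfiedEdges_iff {A : Finset (GainEdge n)} (hA : A ⊆ E) {x : Fin n → ℤ} :
    A ⊆ satisfiedEdges E x ↔ IsPotential A x := by
  simp only [isPotential_iff, subset_iff, satisfiedEdges, mem_filter]
  exact forall₂_congr fun e he => and_iff_right (hA he)

lemma satisfiedEdges_eq_empty_iff {x : Fin n → ℤ} :
    satisfiedEdges E x = ∅ ↔ ProperFor E x :=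
  filter_eq_empty_iff

lemma mem_Latb {B : Finset (GainEdge n)} :
    B ∈ Latb E ↔ B ⊆ E ∧ IsBalanced B ∧ GGClosed E B := by
  rw [Latb, mem_filter, mem_powerset]

lemma satisfiedEdges_mem_Latb (x : Fin n → ℤ) : satisfiedEdges E x ∈ Latb E := by
  have hx : IsPotential (satisfiedEdges E x) x :=
    (subset_satisfiedEdges_iff (filter_subset _ _)).1 subset_rfl
  refine mem_Latb.2 ⟨filter_subset _ _, ⟨x, hx⟩, ?_⟩
  rintro e he hcomp ⟨θ, hθ⟩
  obtain ⟨heE, heS⟩ := mem_sdiff.1 he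
  -- `θ` and `x` differ by a constant on the block containing both endpoints of `e`
  have hconst := hx.sub_eq_sub_of_sameComp (fun f hf => hθ f (mem_insert_of_mem hf)) hcomp
  have he_θ := hθ e (mem_insert_self e _)
  exact heS (mem_filter.2 ⟨heE, by omega⟩)

lemma empty_mem_Latb (hE : ∀ e ∈ E, e.1 ≠ e.2.1) : (∅ : Finset (GainEdge n)) ∈ Latb E := by
  refine mem_Latb.2 ⟨empty_subset _, ⟨0, fun e he => absurd he (notMem_empty e)⟩, ?_⟩
  intro e he hcomp
  exact absurd hcomp.eq_of_empty (hE e (mem_sdiff.1 he).1)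

lemma sum_card_filter_satisfiedEdges_eq {A : Finset (GainEdge n)} (hA : A ⊆ E)
    (X : Finset (Fin n → ℤ)) :
    ∑ B ∈ (Latb E).filter (A ⊆ ·), #(X.filter (satisfiedEdges E · = B)) =
      #(X.filter (IsPotential A)) := by
  rw [card_eq_sum_card_fiberwise (f := satisfiedEdges E) (t := (Latb E).filter (A ⊆ ·))]
  · refine sum_congr rfl fun B hB => congrArg card ?_
    rw [filter_filter]
    refine filter_congr fun x _ => ⟨fun hx => ⟨?_, hx⟩, fun hx => hx.2⟩
    rw [← subset_satisfiedEdges_iff hA, hx]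
    exact (mem_filter.1 hB).2
  · intro x hx
    exact mem_filter.2 ⟨satisfiedEdges_mem_Latb x,
      (subset_satisfiedEdges_iff hA).2 (mem_filter.1 hx).2⟩

end SatisfiedEdges

section Counting

noncomputable def rootedBox (h : Fin n → ℤ) (m : ℤ) : Finset (Fin n → ℤ) :=
  Fintype.piFinset fun v => Ioc (h v) m

lemma mem_rootedBox {h : Fin n → ℤ} {m : ℤ} {x : Fin n → ℤ} :
    x ∈ rootedBox h m ↔ ∀ v, h v < x v ∧ x v ≤ m := by
  simp [rootedBox]

lemma rootedProperCount_eq_card (E : Finset (GainEdge n)) (h : Fin n → ℤ) (m : ℤ) :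
    rootedProperCount E h m = #((rootedBox h m).filter (satisfiedEdges E · = ∅)) := by
  rw [rootedProperCount, ← Nat.card_eq_finsetCard]
  exact Nat.card_congr <| Equiv.subtypeEquivRight fun x => by
    rw [mem_filter, mem_rootedBox, satisfiedEdges_eq_empty_iff]

lemma card_offsets {ι : Type*} (W : Finset ι) (hW : W.Nonempty) (h θ : ι → ℤ) (m : ℤ) :
    Nat.card {t : ℤ // ∀ v ∈ W, h v < θ v + t ∧ θ v + t ≤ m} =
      (m - W.sup' hW (fun v => h v + W.sup' hW θ - θ v)).toNat := by
  have hiff : ∀ t : ℤ, (∀ v ∈ W, h v < θ v + t ∧ θ v + t ≤ m) ↔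
      t ∈ Ioc (W.sup' hW (fun v => h v - θ v)) (m - W.sup' hW θ) := by
    intro t
    rw [mem_Ioc, sup'_lt_iff, le_sub_comm, sup'_le_iff, ← forall₂_and]
    exact forall₂_congr fun v _ => by omega
  have hsup : W.sup' hW (fun v => h v + W.sup' hW θ - θ v) =
      W.sup' hW (fun v => h v - θ v) + W.sup' hW θ := by
    rw [sup'_add]
    exact sup'_congr hW rfl fun v _ => by ring
  rw [Nat.card_congr (Equiv.subtypeEquivRight hiff), Nat.card_eq_finsetCard, Int.card_Ioc, hsup]
  congr 1
  ring

variable {B : Finset (GainEdge n)} {θ : Fin n → ℤ} {h : Fin n → ℤ} {m : ℤ}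

/-- A rooted coloration that is a potential for `B` is `θ` plus an offset that is constant on
each block of `π(B)`. -/
noncomputable def IsPotential.rootedOffsetsEquiv (hθ : IsPotential B θ) :
    {x // x ∈ rootedBox h m ∧ IsPotential B x} ≃
      ((W : blocks B) → {t : ℤ // ∀ v ∈ W.1, h v < θ v + t ∧ θ v + t ≤ m}) where
  toFun x W :=
    ⟨x.1 (nonempty_of_mem_blocks W.2).choose - θ (nonempty_of_mem_blocks W.2).choose,
      fun v hv => by
        have hshift := x.2.2.sub_eq_sub_of_sameComp hθ
          (sameComp_of_mem_blocks W.2 hv (nonempty_of_mem_blocks W.2).choose_spec)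
        have hbox := mem_rootedBox.1 x.2.1 v
        omega⟩
  invFun y :=
    ⟨fun v => θ v + (y ⟨component B v, component_mem_blocks v⟩).1,
      mem_rootedBox.2 fun v => (y _).2 v (self_mem_component v),
      fun e he => by
        have hcomp : (⟨component B e.2.1, component_mem_blocks _⟩ : blocks B) =
            ⟨component B e.1, component_mem_blocks _⟩ :=
          Subtype.ext <| eq_component_of_mem_blocks (component_mem_blocks _)
            (mem_component.2 (Relation.EqvGen.rel _ _ ⟨e.2.2, he⟩))
        have hy := congrArg (fun W => (y W : ℤ)) hcomp
        have he_θ := hθ e he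
        dsimp only at hy ⊢
        omega⟩
  left_inv x := by
    ext v
    have hshift := x.2.2.sub_eq_sub_of_sameComp hθ <| mem_component.1
      (nonempty_of_mem_blocks (component_mem_blocks (S := B) v)).choose_spec
    simp only
    omega
  right_inv y := by
    funext W
    obtain ⟨W, hW⟩ := W
    have hrep := (nonempty_of_mem_blocks hW).choose_spec
    have hcomp : (⟨component B (nonempty_of_mem_blocks hW).choose, component_mem_blocks _⟩ :
        blocks B) = ⟨W, hW⟩ := Subtype.ext (eq_component_of_mem_blocks hW hrep).symm
    ext
    have hy := congrArg (fun W => (y W : ℤ)) hcomp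
    dsimp only at hy ⊢
    omega

lemma IsPotential.card_rootedBox_filter (hθ : IsPotential B θ) (F : Finset (Fin n) → ℤ)
    (hF : ∀ W ∈ blocks B, ∀ hW : W.Nonempty,
      F W = W.sup' hW (fun v => h v + W.sup' hW θ - θ v)) :
    (#((rootedBox h m).filter (IsPotential B)) : ℤ) = ∏ W ∈ blocks B, max (m - F W) 0 := by
  rw [← Nat.card_eq_finsetCard,
    Nat.card_congr ((Equiv.subtypeEquivRight fun _ => mem_filter).trans hθ.rootedOffsetsEquiv),
    Nat.card_pi, Nat.cast_prod, ← prod_coe_sort (blocks B)]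
  refine Fintype.prod_congr _ _ fun W => ?_
  rw [card_offsets _ (nonempty_of_mem_blocks W.2), ← hF W.1 W.2, Int.toNat_eq_max]

end Counting

lemma sum_mul_sum_filter_eq_of_moebius {α R : Type*} [DecidableEq α] [NonAssocSemiring R]
    {r : α → α → Prop} [DecidableRel r] {L : Finset α} {a₀ : α} (ha₀ : a₀ ∈ L) (mu f : α → R)
    (hmu : ∀ b ∈ L, ∑ a ∈ L.filter (r · b), mu a = if b = a₀ then 1 else 0) :
    ∑ a ∈ L, mu a * ∑ b ∈ L.filter (r a ·), f b = f a₀ := by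
  calc ∑ a ∈ L, mu a * ∑ b ∈ L.filter (r a ·), f b
      = ∑ b ∈ L, (∑ a ∈ L.filter (r · b), mu a) * f b := by
        simp_rw [mul_sum, sum_mul, sum_filter]
        exact sum_comm
    _ = ∑ b ∈ L, (if b = a₀ then 1 else 0) * f b := sum_congr rfl fun b hb => by rw [hmu b hb]
    _ = f a₀ := by simp [ha₀]

/-- Here `mu` is the Möbius function of `Lat^b(E)`, pinned down by `hmu`, and `ht B W` is the
rooted height `h_B(W)`, pinned down by `hht`. -/
theorem rooted_integral_expansion (n : ℕ) (E : Finset (GainEdge n))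
    (hE : ∀ e ∈ E, e.1 < e.2.1)
    (h : Fin n → ℤ) (m : ℤ)
    (mu : Finset (GainEdge n) → ℤ)
    (hmu : ∀ B ∈ Latb E,
      ∑ A ∈ (Latb E).filter (· ⊆ B), mu A = if B = ∅ then 1 else 0)
    (ht : Finset (GainEdge n) → Finset (Fin n) → ℤ)
    (hht : ∀ B ∈ Latb E, ∀ θ : Fin n → ℤ, IsPotential B θ →
      ∀ W ∈ blocks B, ∀ hW : W.Nonempty,
        ht B W = W.sup' hW (fun v => h v + W.sup' hW θ - θ v)) :
    (rootedProperCount E h m : ℤ) =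
      ∑ B ∈ Latb E, mu B * ∏ W ∈ blocks B, max (m - ht B W) 0 := by
  set X := rootedBox h m
  have hcount : ∀ A ∈ Latb E,
      ∑ B ∈ (Latb E).filter (A ⊆ ·), (#(X.filter (satisfiedEdges E · = B)) : ℤ) =
        ∏ W ∈ blocks A, max (m - ht A W) 0 := by
    intro A hA
    obtain ⟨hAE, ⟨θ, hθ⟩, -⟩ := mem_Latb.1 hA
    rw [← Nat.cast_sum, sum_card_filter_satisfiedEdges_eq hAE,
      hθ.card_rootedBox_filter _ (hht A hA θ hθ)]
  rw [rootedProperCount_eq_card, ← sum_mul_sum_filter_eq_of_moebius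
    (empty_mem_Latb fun e he => (hE e he).ne) mu
    (fun B => (#(X.filter (satisfiedEdges E · = B)) : ℤ)) hmu]
  exact sum_congr rfl fun A hA => by rw [hcount A hA]
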